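/- For every real $s > 1$, $\sum_{n=1}^\infty \frac{d(n)^2}{n^s} = \frac{\zeta(s)^4}{\zeta(2s)}$, where $d(n)$ is the number of divisors of $n$ and $\zeta$ is the Riemann zeta function. -/

import Mathlib

/-!
Let `𝟙□` be the indicator of the nonzero squares. Then `𝟙□ * d² = d * d` as Dirichlet
convolutions: both sides are multiplicative, and at a prime power `p ^ e` both equal
`(e + 1)(e + 2)(e + 3) / 6`. Passing to L-series for `Re s > 1`, where `L(𝟙□, s) = ζ(2s)` and
`L(d, s) = ζ(s)²`, gives `ζ(2s) · L(d², s) = ζ(s)⁴`. The series of `d²` converges absolutely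
because `d² ≤ 𝟙□ * d² = d * d` termwise.
-/

open ArithmeticFunction Finset
open scoped ArithmeticFunction.sigma ArithmeticFunction.zeta LSeries.notation

theorem Nat.Coprime.isSquare_mul_iff {m n : ℕ} (hmn : m.Coprime n) :
    IsSquare (m * n) ↔ IsSquare m ∧ IsSquare n := by
  refine ⟨fun ⟨c, hc⟩ => ?_, fun ⟨hm, hn⟩ => hm.mul hn⟩
  rw [← sq] at hc
  obtain ⟨a, ha⟩ := exists_eq_pow_of_mul_eq_pow (Nat.isUnit_iff.mpr hmn) hc
  obtain ⟨b, hb⟩ :=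
    exists_eq_pow_of_mul_eq_pow (Nat.isUnit_iff.mpr hmn.symm) ((mul_comm n m).trans hc)
  exact ⟨⟨a, ha.trans (sq a)⟩, ⟨b, hb.trans (sq b)⟩⟩

theorem Nat.Prime.isSquare_pow_iff {p i : ℕ} (hp : p.Prime) : IsSquare (p ^ i) ↔ Even i := by
  refine ⟨fun ⟨c, hc⟩ => ?_, fun hi => hi.isSquare_pow p⟩
  have hc0 : c ≠ 0 := by rintro rfl; simp [hp.ne_zero] at hc
  have hval := congrArg (·.factorization p) hc
  simp only [hp.factorization_pow, Finsupp.single_eq_same, Nat.factorization_mul hc0 hc0,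
    Finsupp.add_apply] at hval
  exact ⟨_, hval⟩

theorem two_mul_sum_antidiagonal_snd_succ (e : ℕ) :
    2 * ∑ x ∈ antidiagonal e, (x.2 + 1) = (e + 1) * (e + 2) := by
  induction e with
  | zero => simp
  | succ e ih => rw [Nat.sum_antidiagonal_succ, mul_add, ih]; ring

theorem six_mul_sum_antidiagonal_succ_mul_succ (e : ℕ) :
    6 * ∑ x ∈ antidiagonal e, (x.1 + 1) * (x.2 + 1) = (e + 1) * (e + 2) * (e + 3) := by
  induction e with
  | zero => simp
  | succ e ih =>
    have h := two_mul_sum_antidiagonal_snd_succ e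
    simp only [Nat.sum_antidiagonal_succ, add_mul (_ + 1) 1, one_mul, sum_add_distrib] at h ⊢
    linear_combination ih + 3 * h

theorem six_mul_sum_antidiagonal_even_succ_sq (e : ℕ) :
    6 * ∑ x ∈ antidiagonal e, (if Even x.1 then (x.2 + 1) ^ 2 else 0) =
      (e + 1) * (e + 2) * (e + 3) := by
  induction e using Nat.twoStepInduction with
  | zero => decide
  | one => decide
  | more e ih _ =>
    simp only [Nat.sum_antidiagonal_succ, Nat.even_add_one, not_not]
    simp only [Even.zero, ↓reduceIte, not_true_eq_false, zero_add]
    linear_combination ih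

theorem LSeries_ofReal_eq_tsum (f : ℕ → ℝ) (s : ℝ) :
    LSeries (fun n => (f n : ℂ)) s = ↑(∑' n : ℕ, f (n + 1) / ((n + 1 : ℕ) : ℝ) ^ s) := by
  rw [LSeries, ← Nat.succ_injective.tsum_eq, Complex.ofReal_tsum]
  · refine tsum_congr fun n => ?_
    rw [LSeries.term_of_ne_zero n.succ_ne_zero, Complex.ofReal_div,
      Complex.ofReal_cpow (by positivity)]
    push_cast; rfl
  · intro n hn
    have hn0 : n ≠ 0 := by rintro rfl; simp at hn
    exact ⟨n - 1, Nat.succ_pred_eq_of_ne_zero hn0⟩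

namespace ArithmeticFunction

def squareIndicator : ArithmeticFunction ℕ :=
  ⟨fun n => if n ≠ 0 ∧ IsSquare n then 1 else 0, by simp⟩

theorem squareIndicator_apply (n : ℕ) :
    squareIndicator n = if n ≠ 0 ∧ IsSquare n then 1 else 0 := rfl

theorem isMultiplicative_squareIndicator : squareIndicator.IsMultiplicative := by
  rw [IsMultiplicative.iff_ne_zero]
  refine ⟨by simp [squareIndicator_apply], fun {m n} hm hn hmn => ?_⟩
  simp only [squareIndicator_apply, ne_eq, mul_eq_zero, hm, hn, or_self, not_false_eq_true,
    true_and, hmn.isSquare_mul_iff]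
  by_cases h1 : IsSquare m <;> by_cases h2 : IsSquare n <;> simp [h1, h2]

theorem squareIndicator_apply_prime_pow {p i : ℕ} (hp : p.Prime) :
    squareIndicator (p ^ i) = if Even i then 1 else 0 := by
  simp [squareIndicator_apply, hp.ne_zero, hp.isSquare_pow_iff]

theorem mul_apply_prime_pow {R : Type*} [Semiring R] (f g : ArithmeticFunction R) {p : ℕ}
    (hp : p.Prime) (i : ℕ) :
    (f * g) (p ^ i) = ∑ x ∈ antidiagonal i, f (p ^ x.1) * g (p ^ x.2) := by
  rw [mul_apply, Nat.sum_divisorsAntidiagonal (fun a b => f a * g b),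
    Nat.sum_divisors_prime_pow hp,
    Nat.sum_antidiagonal_eq_sum_range_succ (fun a b => f (p ^ a) * g (p ^ b))]
  refine sum_congr rfl fun k hk => ?_
  rw [Nat.pow_div (by simpa [Nat.lt_succ_iff] using hk) hp.pos]

theorem apply_le_mul_apply {f g : ArithmeticFunction ℕ} (hg : 1 ≤ g 1) (n : ℕ) :
    f n ≤ (g * f) n := by
  rcases eq_or_ne n 0 with rfl | hn
  · simp
  have h1n : (1, n) ∈ n.divisorsAntidiagonal := by simpa using hn
  rw [mul_apply]
  calc f n ≤ g 1 * f n := Nat.le_mul_of_pos_left _ hg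
    _ ≤ _ := single_le_sum (f := fun x : ℕ × ℕ => g x.1 * f x.2) (fun _ _ => Nat.zero_le _) h1n

theorem squareIndicator_mul_pmul_sigma_zero :
    squareIndicator * (σ 0).pmul (σ 0) = σ 0 * σ 0 := by
  have hσ := isMultiplicative_sigma (k := 0)
  refine (IsMultiplicative.eq_iff_eq_on_prime_powers _
    (isMultiplicative_squareIndicator.mul (hσ.pmul hσ)) _ (hσ.mul hσ)).2 fun p i hp => ?_
  apply Nat.eq_of_mul_eq_mul_left (by norm_num : 0 < 6)
  simp only [mul_apply_prime_pow _ _ hp, squareIndicator_apply_prime_pow hp, pmul_apply,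
    sigma_zero_apply_prime_pow hp]
  simpa [sq] using (six_mul_sum_antidiagonal_even_succ_sq i).trans
    (six_mul_sum_antidiagonal_succ_mul_succ i).symm

theorem LSeriesHasSum_natCoe_mul {f g : ArithmeticFunction ℕ} {s a b : ℂ}
    (hf : LSeriesHasSum ↗f s a) (hg : LSeriesHasSum ↗g s b) :
    LSeriesHasSum ↗(f * g) s (a * b) := by
  simpa [natCoe_mul] using LSeriesHasSum_mul (f := (f : ArithmeticFunction ℂ)) (g := g)
    (by simpa using hf) (by simpa using hg)

theorem LSeriesHasSum_sigma_zero {s : ℂ} (hs : 1 < s.re) :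
    LSeriesHasSum ↗(σ 0) s (riemannZeta s ^ 2) := by
  rw [← zeta_mul_pow_eq_sigma, pow_zero_eq_zeta, sq]
  exact LSeriesHasSum_natCoe_mul (LSeriesHasSum_zeta hs) (LSeriesHasSum_zeta hs)

theorem LSeriesHasSum_squareIndicator {s : ℂ} (hs : 1 / 2 < s.re) :
    LSeriesHasSum ↗squareIndicator s (riemannZeta (2 * s)) := by
  have hsq : Function.Injective fun k : ℕ => k ^ 2 := Nat.pow_left_injective two_ne_zero
  have hsupp : ∀ n ∉ Set.range fun k : ℕ => k ^ 2, LSeries.term ↗squareIndicator s n = 0 := by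
    intro n hn
    have hn' : ¬ (n ≠ 0 ∧ IsSquare n) := fun ⟨_, k, hk⟩ => hn ⟨k, by simp [hk, sq]⟩
    simp [LSeries.term, squareIndicator_apply, hn']
  have hζ : HasSum (LSeries.term 1 (2 * s)) (riemannZeta (2 * s)) :=
    LSeriesHasSum_one (by simp; linarith)
  refine (hsq.hasSum_iff hsupp).1 (hζ.congr_fun fun k => ?_)
  rcases eq_or_ne k 0 with rfl | hk
  · simp
  simp [LSeries.term, squareIndicator_apply, hk, IsSquare.sq k,
    ← Complex.natCast_cpow_natCast_mul]

theorem LSeries_sigma_zero_sq {s : ℂ} (hs : 1 < s.re) :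
    LSeries (fun n => (σ 0 n : ℂ) ^ 2) s = riemannZeta s ^ 4 / riemannZeta (2 * s) := by
  have hζ2 : riemannZeta (2 * s) ≠ 0 := riemannZeta_ne_zero_of_one_lt_re (by simp; linarith)
  have hconv :=
    LSeriesHasSum_natCoe_mul (LSeriesHasSum_sigma_zero hs) (LSeriesHasSum_sigma_zero hs)
  have hsum : LSeriesSummable ↗((σ 0).pmul (σ 0)) s := by
    refine hconv.summable.norm.of_norm_bounded fun n => LSeries.norm_term_le _ ?_
    simp only [Complex.norm_natCast, Nat.cast_le]
    rw [← squareIndicator_mul_pmul_sigma_zero]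
    exact apply_le_mul_apply (by simp [squareIndicator_apply]) n
  have hprod := LSeriesHasSum_natCoe_mul (LSeriesHasSum_squareIndicator (s := s) (by linarith))
    hsum.LSeriesHasSum
  rw [squareIndicator_mul_pmul_sigma_zero] at hprod
  rw [eq_div_iff hζ2]
  calc _ = riemannZeta (2 * s) * L ↗((σ 0).pmul (σ 0)) s := by simp [pmul_apply, sq, mul_comm]
    _ = _ := by rw [← hconv.unique hprod]; ring

end ArithmeticFunction

/-- Ramanujan's identity: for real `s > 1`,
`∑ d(n)² / n^s = ζ(s)⁴ / ζ(2s)`. -/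
theorem ramanujan_divisor_squared (s : ℝ) (hs : 1 < s) :
    ∑' n : ℕ, ((n + 1).divisors.card : ℝ) ^ 2 / ((n + 1 : ℕ) : ℝ) ^ s =
      (∑' n : ℕ, 1 / ((n + 1 : ℕ) : ℝ) ^ s) ^ 4 /
        (∑' n : ℕ, 1 / ((n + 1 : ℕ) : ℝ) ^ (2 * s)) := by
  have hζ (t : ℝ) (ht : 1 < t) :
      ((∑' n : ℕ, 1 / ((n + 1 : ℕ) : ℝ) ^ t : ℝ) : ℂ) = riemannZeta t := by
    have h := LSeries_ofReal_eq_tsum 1 t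
    simp only [Pi.one_apply, Complex.ofReal_one] at h
    exact h.symm.trans (LSeries_one_eq_riemannZeta (by simpa))
  rw [← Complex.ofReal_inj, ← LSeries_ofReal_eq_tsum (fun n => (n.divisors.card : ℝ) ^ 2),
    Complex.ofReal_div, Complex.ofReal_pow, hζ s hs, hζ (2 * s) (by linarith),
    Complex.ofReal_mul, Complex.ofReal_ofNat, ← LSeries_sigma_zero_sq (by simpa)]
  simp [sigma_zero_apply]
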